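/- arXiv:1508.01836 — 6 statements merged into one kernel-verified Lean document; each statement's English description precedes it below -/
import Mathlib

section
/- Let K be an algebraically closed field of characteristic p > 0. Then the field of Puiseux series ⋃_{n≥1} K((t^{1/n})) is not algebraically closed: there is no Puiseux series x satisfying x^p - x = t^{-1}. -/
/-- A Hahn series over `ℚ` is a Puiseux series if all exponents in its support
have a common bounded denominator, i.e. it lies in `K((t^{1/n}))` for some `n ≥ 1`. -/
def IsPuiseuxSeries {K : Type*} [Field K] (x : HahnSeries ℚ K) : Prop :=
  ∃ n : ℕ, 0 < n ∧ ∀ q ∈ x.support, ∃ m : ℤ, q = (m : ℚ) / n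

namespace PuiseuxAux

open HahnSeries


variable {p : ℕ} [Fact p.Prime] {K : Type*} [Field K] [CharP K p]

lemma hahn_charP : CharP (HahnSeries ℚ K) p :=
  charP_of_injective_ringHom (f := (HahnSeries.C : K →+* HahnSeries ℚ K)) HahnSeries.C_injective p

lemma leadingCoeff_pow (z : HahnSeries ℚ K) (hz : z ≠ 0) (n : ℕ) :
    (z ^ n).coeff (n • z.order) = z.leadingCoeff ^ n := by
  induction n with
  | zero => simp
  | succ n IH =>
    have h1 : (z ^ n) ≠ 0 := pow_ne_zero _ hz
    have := coeff_mul_order_add_order (z ^ n) z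
    rw [order_pow] at this
    rw [pow_succ, succ_nsmul, this, pow_succ, ← IH, leadingCoeff_eq, leadingCoeff_eq, order_pow]

lemma step {z : HahnSeries ℚ K} {e : ℚ} {c : K} (he : e < 0) (hc : c ≠ 0)
    (hz : z ^ p - z = HahnSeries.single e c) :
    z.coeff (e / p) ≠ 0 ∧
      (z - single (e / p) (z.coeff (e / p))) ^ p - (z - single (e / p) (z.coeff (e / p)))
        = single (e / p) (z.coeff (e / p)) := by
  haveI := (inferInstance : Fact p.Prime)
  have hp1 : 1 < p := (Fact.out : p.Prime).one_lt
  have hpQ : (1 : ℚ) < p := by exact_mod_cast hp1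
  have hpQ0 : (p : ℚ) ≠ 0 := by positivity
  -- z ≠ 0
  have hz0 : z ≠ 0 := by
    rintro rfl
    rw [zero_pow (by omega : p ≠ 0), sub_zero] at hz
    exact single_ne_zero hc hz.symm
  set v := z.order with hv
  -- v < 0
  have hvneg : v < 0 := by
    by_contra h
    push_neg at h
    have h1 : z.coeff e = 0 := coeff_eq_zero_of_lt_order (lt_of_lt_of_le he h)
    have h2 : (z ^ p).coeff e = 0 := by
      apply coeff_eq_zero_of_lt_order
      rw [order_pow]
      calc e < 0 := he
        _ ≤ (p : ℚ) * v := by positivity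
        _ = p • v := by rw [nsmul_eq_mul]
    have := congrArg (fun w => HahnSeries.coeff w e) hz
    simp only [coeff_sub, h1, h2, coeff_single_same, sub_zero] at this
    exact hc this.symm
  -- p • v = e
  have hpv : (p : ℚ) * v < v := by nlinarith
  have hlc : (z ^ p).coeff ((p : ℚ) * v) = z.leadingCoeff ^ p := by
    have := leadingCoeff_pow z hz0 p
    rwa [nsmul_eq_mul] at this
  have hzc : z.coeff ((p : ℚ) * v) = 0 := coeff_eq_zero_of_lt_order hpv
  have hne : (z ^ p - z).coeff ((p : ℚ) * v) ≠ 0 := by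
    rw [coeff_sub, hzc, sub_zero, hlc]
    exact pow_ne_zero _ (leadingCoeff_ne_zero.mpr hz0)
  have hpve : (p : ℚ) * v = e := by
    by_contra hne'
    rw [hz, coeff_single_of_ne hne'] at hne
    exact hne rfl
  have hvev : v = e / p := by field_simp [hpve]; linarith [hpve]
  set d := z.coeff (e / p) with hd
  have hd0 : d ≠ 0 := by
    rw [hd, ← hvev]
    exact coeff_order_eq_zero.not.mpr hz0
  have hdp : d ^ p = c := by
    have h1 : (z ^ p).coeff e = z.leadingCoeff ^ p := by rw [← hpve]; exact hlc
    have h2 : z.coeff e = 0 := coeff_eq_zero_of_lt_order (by rw [← hpve]; exact hpv)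
    have := congrArg (fun w => HahnSeries.coeff w e) hz
    simp only [coeff_sub, h1, h2, coeff_single_same, sub_zero] at this
    rw [hd, ← hvev, ← leadingCoeff_eq, this]
  refine ⟨hd0, ?_⟩
  haveI : CharP (HahnSeries ℚ K) p := hahn_charP
  have hsp : (single (e / p) d : HahnSeries ℚ K) ^ p = single e (d ^ p) := by
    rw [single_pow]
    congr 1
    rw [nsmul_eq_mul]
    field_simp
  rw [sub_pow_char, hsp, hdp, sub_sub_sub_comm, hz, sub_sub_cancel]


end PuiseuxAux

open PuiseuxAux HahnSeries in
/-- The field of Puiseux series over an algebraically closed field of characteristic `p > 0`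
is not algebraically closed: no Puiseux series `x` satisfies `x^p - x = t^{-1}`. -/
theorem puiseux_not_algebraically_closed
    (p : ℕ) [Fact p.Prime] (K : Type*) [Field K] [IsAlgClosed K] [CharP K p] :
    ¬ ∃ x : HahnSeries ℚ K, IsPuiseuxSeries x ∧
      x ^ p - x = HahnSeries.single (-1 : ℚ) (1 : K) := by
  rintro ⟨x, hPx, heq⟩
  obtain ⟨n, hn, hsupp⟩ := hPx
  have hp1 : 1 < p := (Fact.out : p.Prime).one_lt
  have hpQ0 : (0:ℚ) < p := by exact_mod_cast Nat.lt_of_lt_of_le Nat.zero_lt_one hp1.le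
  set E : ℕ → ℚ := fun k => -(((p:ℚ) ^ k)⁻¹) with hE
  have hEneg : ∀ k, E k < 0 := by
    intro k
    have : (0:ℚ) < ((p:ℚ)^k)⁻¹ := by positivity
    simp only [hE]
    linarith
  have hEdiv : ∀ k, E k / p = E (k+1) := by
    intro k
    simp only [hE, pow_succ]
    field_simp
  have hEmono : ∀ k, E k < E (k+1) := by
    intro k
    have h := hEdiv k
    have := hEneg k
    have hp1Q : (1:ℚ) < p := by exact_mod_cast hp1
    rw [← h, lt_div_iff₀ hpQ0]
    nlinarith
  have key : ∀ k : ℕ, ∃ z : HahnSeries ℚ K, ∃ c : K, c ≠ 0 ∧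
      z ^ p - z = HahnSeries.single (E k) c ∧ ∀ q ∈ (x - z).support, q ≤ E k := by
    intro k
    induction k with
    | zero => exact ⟨x, 1, one_ne_zero, by simpa [hE] using heq, by simp⟩
    | succ k IH =>
      obtain ⟨z, c, hc, hz, hb⟩ := IH
      obtain ⟨hd, hz'⟩ := step (hEneg k) hc hz
      refine ⟨z - single (E k / p) (z.coeff (E k / p)), z.coeff (E k / p), hd,
        by rw [hEdiv] at hz' ⊢; exact hz', ?_⟩
      intro q hq
      rw [HahnSeries.mem_support] at hq
      have hrw : (x - (z - single (E k / p) (z.coeff (E k / p)))).coeff q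
          = (x - z).coeff q + (single (E k / p) (z.coeff (E k / p))).coeff q := by
        simp only [HahnSeries.coeff_sub, HahnSeries.coeff_add]
        ring
      rw [hrw] at hq
      by_cases hq1 : (x - z).coeff q = 0
      · rw [hq1, zero_add] at hq
        have : q = E k / p := by
          by_contra hne
          exact hq (coeff_single_of_ne hne)
        rw [this, hEdiv]
      · have := hb q hq1
        exact le_of_lt (lt_of_le_of_lt this (hEmono k))
  have mem : ∀ k : ℕ, x.coeff (E (k+1)) ≠ 0 := by
    intro k
    obtain ⟨z, c, hc, hz, hb⟩ := key k
    obtain ⟨hd, _⟩ := step (hEneg k) hc hz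
    rw [hEdiv] at hd
    have hxz : (x - z).coeff (E (k+1)) = 0 := by
      by_contra h
      exact absurd (hb _ h) (not_le.mpr (hEmono k))
    rw [HahnSeries.coeff_sub, sub_eq_zero] at hxz
    rw [hxz]
    exact hd
  obtain ⟨m, hm⟩ := hsupp _ (HahnSeries.mem_support _ _ |>.mpr (mem n))
  have hn0 : (n:ℚ) ≠ 0 := by exact_mod_cast hn.ne'
  have hmQ : -(n:ℚ) = m * (p:ℚ)^(n+1) := by
    simp only [hE] at hm
    field_simp at hm
    linarith [hm]
  have hmZ : -(n:ℤ) = m * (p:ℤ)^(n+1) := by exact_mod_cast hmQ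
  have hdvd : ((p:ℤ)^(n+1)) ∣ (n:ℤ) := ⟨-m, by linarith [hmZ, mul_comm m ((p:ℤ)^(n+1))]⟩
  have hle : (p:ℤ)^(n+1) ≤ n := Int.le_of_dvd (by exact_mod_cast hn) hdvd
  have hlt : (n:ℤ) < (p:ℤ)^(n+1) := by
    have h1 : n < p ^ n := Nat.lt_pow_self hp1
    have h2 : p ^ n ≤ p ^ (n+1) := Nat.pow_le_pow_right (by omega) (by omega)
    exact_mod_cast Nat.lt_of_lt_of_le h1 h2
  omega
end

section
/- Let F ⊂ F' be an inclusion of algebraically closed fields of characteristic p, let V be a finite-dimensional F-vector space, and set V' = V ⊗_F F'. If v ∈ V' satisfies v = f(v) for some additive endomorphism f of V' obtained by scalar extension of a Frobenius-semilinear (or inverse-Frobenius-semilinear) endomorphism of V, then v ∈ V (i.e., v lies in the image of V under the canonical map). -/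
open TensorProduct Polynomial

section Aux

variable (p : ℕ) [Fact p.Prime] {F F' : Type*} [Field F] [Field F']
  [CharP F p] [CharP F' p] [Algebra F F']

/-- Frobenius iterates map an `F`-span into the `F`-span of the image. -/
lemma pow_mem_span_pow_image (m : ℕ) (S : Set F') {x : F'}
    (hx : x ∈ Submodule.span F S) :
    x ^ p ^ m ∈ Submodule.span F ((fun y => y ^ p ^ m) '' S) := by
  induction hx using Submodule.span_induction with
  | mem y hy => exact Submodule.subset_span ⟨y, hy, rfl⟩
  | zero =>
    rw [zero_pow (pow_ne_zero m (Fact.out : p.Prime).ne_zero)]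
    exact Submodule.zero_mem _
  | add a b _ _ ha hb =>
    rw [add_pow_char_pow]
    exact Submodule.add_mem _ ha hb
  | smul a y _ hy =>
    have : (a • y) ^ p ^ m = (a ^ p ^ m) • y ^ p ^ m := smul_pow _ _ _
    rw [this]
    exact Submodule.smul_mem _ _ hy

variable [IsAlgClosed F]

/-- If all `p^(M+m)`-th powers of `x` lie in a fixed finite-dimensional `F`-subspace of `F'`,
then `x` is algebraic over `F`, hence lies in `F`. -/
lemma aux_mem_range (x : F') (W : Submodule F F') [FiniteDimensional F W]
    (M : ℕ) (h : ∀ m : ℕ, x ^ p ^ (M + m) ∈ W) :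
    x ∈ Set.range (algebraMap F F') := by
  classical
  set d := Module.finrank F W with hd
  set u : Fin (d + 1) → W := fun k => ⟨x ^ p ^ (M + (k : ℕ)), h k⟩ with hu
  have hni : ¬ LinearIndependent F u := by
    intro li
    have := li.fintype_card_le_finrank
    simp only [Fintype.card_fin] at this
    omega
  obtain ⟨g, hsum, k₀, hk₀⟩ := Fintype.not_linearIndependent_iff.mp hni
  have hsum' : ∑ k : Fin (d + 1), g k • x ^ p ^ (M + (k : ℕ)) = 0 := by
    have := congrArg (W.subtype) hsum
    simpa [map_sum, hu] using this
  have hp2 : 2 ≤ p := (Fact.out : p.Prime).two_le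
  set q : F[X] := ∑ k : Fin (d + 1), C (g k) * X ^ (p ^ (M + (k : ℕ))) with hq
  have hcoeff : q.coeff (p ^ (M + (k₀ : ℕ))) = g k₀ := by
    rw [hq, finset_sum_coeff]
    rw [Finset.sum_eq_single k₀]
    · simp [coeff_C_mul, coeff_X_pow]
    · intro k _ hk
      have hne : p ^ (M + (k₀ : ℕ)) ≠ p ^ (M + (k : ℕ)) := by
        intro hEq
        have := Nat.pow_right_injective hp2 hEq
        exact hk (Fin.ext (by omega)).symm
      simp [coeff_C_mul, coeff_X_pow, hne]
    · intro hk
      exact absurd (Finset.mem_univ k₀) hk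
  have hq0 : q ≠ 0 := by
    intro h0
    rw [h0] at hcoeff
    simp at hcoeff
    exact hk₀ hcoeff.symm
  have haev : aeval x q = 0 := by
    rw [hq]
    rw [map_sum]
    have : ∀ k : Fin (d + 1), aeval x (C (g k) * X ^ (p ^ (M + (k : ℕ))))
        = g k • x ^ p ^ (M + (k : ℕ)) := by
      intro k
      simp [Algebra.smul_def]
    simp_rw [this]
    exact hsum'
  have halg : IsAlgebraic F x := ⟨q, hq0, haev⟩
  have hdeg : (minpoly F x).degree = 1 :=
    IsAlgClosed.degree_eq_one_of_irreducible F (minpoly.irreducible halg.isIntegral)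
  obtain ⟨a, ha⟩ := minpoly.degree_eq_one_iff.mp hdeg
  exact ⟨a, ha⟩

/-- Case of a Frobenius-semilinear relation: each `c j` lies in the span of the `c i ^ p`. -/
lemma aux_case1 {ι : Type*} [Fintype ι] (c : ι → F')
    (h : ∀ j, c j ∈ Submodule.span F (Set.range fun i => c i ^ p)) (i₀ : ι) :
    c i₀ ∈ Set.range (algebraMap F F') := by
  classical
  set Wm : ℕ → Submodule F F' :=
    fun m => Submodule.span F (Set.range fun i => c i ^ p ^ m) with hWm
  haveI : ∀ m, FiniteDimensional F (Wm m) := by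
    intro m
    exact FiniteDimensional.span_of_finite F (Set.finite_range _)
  have hmono : ∀ m, Wm m ≤ Wm (m + 1) := by
    intro m
    rw [hWm]
    rw [Submodule.span_le]
    rintro _ ⟨i, rfl⟩
    have h1 := pow_mem_span_pow_image p m _ (h i)
    refine Submodule.span_le.mpr ?_ h1
    rintro _ ⟨_, ⟨j, rfl⟩, rfl⟩
    show (c j ^ p) ^ p ^ m ∈ (Wm (m + 1) : Set F')
    have : (c j ^ p) ^ p ^ m = c j ^ p ^ (m + 1) := by
      rw [← pow_mul, ← pow_succ']
    rw [this]
    exact Submodule.subset_span ⟨j, rfl⟩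
  have hmono' : Monotone Wm := monotone_nat_of_le_succ hmono
  set dm : ℕ → ℕ := fun m => Module.finrank F (Wm m) with hdm
  have hbdd : ∀ m, dm m ≤ Fintype.card ι := by
    intro m
    have : Wm m = Submodule.span F ((Set.range fun i => c i ^ p ^ m)) := rfl
    calc dm m ≤ (Set.range fun i => c i ^ p ^ m).toFinset.card :=
          finrank_span_le_card _
      _ ≤ Fintype.card ι := by
          rw [Set.toFinset_range]
          exact Finset.card_image_le.trans (by simp)
  set L := sSup (Set.range dm) with hL
  have hLmem : L ∈ Set.range dm :=
    Nat.sSup_mem ⟨dm 0, 0, rfl⟩ ⟨Fintype.card ι, by rintro _ ⟨m, rfl⟩; exact hbdd m⟩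
  obtain ⟨M, hM⟩ := hLmem
  have heq : ∀ m, Wm M = Wm (M + m) := by
    intro m
    refine Submodule.eq_of_le_of_finrank_le (hmono' (Nat.le_add_right M m)) ?_
    have : dm (M + m) ≤ L := le_csSup ⟨Fintype.card ι, by rintro _ ⟨k, rfl⟩; exact hbdd k⟩
      ⟨M + m, rfl⟩
    rw [← hM] at this
    exact this
  refine aux_mem_range p (c i₀) (Wm M) M ?_
  intro m
  rw [heq m]
  exact Submodule.subset_span ⟨i₀, rfl⟩

/-- Case of an inverse-Frobenius-semilinear relation: each `c j ^ p` lies in the span of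
the `c i`. -/
lemma aux_case2 {ι : Type*} [Fintype ι] (c : ι → F')
    (h : ∀ j, c j ^ p ∈ Submodule.span F (Set.range c)) (i₀ : ι) :
    c i₀ ∈ Set.range (algebraMap F F') := by
  classical
  set W : Submodule F F' := Submodule.span F (Set.range c) with hW
  haveI : FiniteDimensional F W := FiniteDimensional.span_of_finite F (Set.finite_range _)
  have hWp : ∀ x ∈ W, x ^ p ∈ W := by
    intro x hx
    have h1 := pow_mem_span_pow_image p 1 _ hx
    rw [pow_one] at h1
    refine Submodule.span_le.mpr ?_ h1
    rintro _ ⟨_, ⟨i, rfl⟩, rfl⟩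
    exact h i
  have hpow : ∀ m, c i₀ ^ p ^ m ∈ W := by
    intro m
    induction m with
    | zero =>
      have : c i₀ ∈ W := Submodule.subset_span (Set.mem_range_self i₀)
      simpa using this
    | succ k ih =>
      have : c i₀ ^ p ^ (k + 1) = (c i₀ ^ p ^ k) ^ p := by
        rw [← pow_mul, pow_succ]
      rw [this]
      exact hWp _ ih
  refine aux_mem_range p (c i₀) W 0 ?_
  intro m
  simpa using hpow m

end Aux

/-- Lemma 3.3.5 of Kedlaya, "Finite automata and algebraic extensions of function fields":
if `F ⊂ F'` is an inclusion of algebraically closed fields of characteristic `p`, `V` a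
finite-dimensional `F`-vector space, and `v ∈ V' = V ⊗_F F'` is fixed by an additive
endomorphism `g` of `V'` obtained by scalar extension of a Frobenius‑semilinear (or
inverse‑Frobenius‑semilinear) endomorphism `f` of `V`, then `v` lies in the image of `V`. -/
theorem fixed_point_of_semilinear_in_base
    (p : ℕ) [Fact p.Prime] (F F' : Type*) [Field F] [Field F'] [IsAlgClosed F] [IsAlgClosed F']
    [CharP F p] [CharP F' p] [Algebra F F']
    (V : Type*) [AddCommGroup V] [Module F V] [FiniteDimensional F V]
    (f : V →+ V) (g : V ⊗[F] F' →+ V ⊗[F] F')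
    (hcase :
      ((∀ (r : F) (w : V), f (r • w) = frobenius F p r • f w) ∧
        ∀ (w : V) (c : F'), g (w ⊗ₜ c) = f w ⊗ₜ frobenius F' p c) ∨
      ((∀ (r : F) (w : V), f (r • w) = (frobeniusEquiv F p).symm r • f w) ∧
        ∀ (w : V) (c : F'), g (w ⊗ₜ c) = f w ⊗ₜ (frobeniusEquiv F' p).symm c))
    (v : V ⊗[F] F') (hv : g v = v) :
    v ∈ Set.range (fun w : V => w ⊗ₜ[F] (1 : F')) := by
  classical
  set b : Module.Basis (Fin (Module.finrank F V)) F V := Module.finBasis F V with hb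
  set coord : Fin (Module.finrank F V) → (V ⊗[F] F' →ₗ[F] F') := fun j =>
    (TensorProduct.lid F F').toLinearMap ∘ₗ LinearMap.rTensor F' (b.coord j) with hcoorddef
  have hcoord : ∀ (j) (w : V) (d : F'), coord j (w ⊗ₜ d) = b.repr w j • d := by
    intro j w d
    simp [hcoorddef, TensorProduct.lid_tmul, Module.Basis.coord_apply]
  have hrepr : ∀ u : V ⊗[F] F', u = ∑ i, b i ⊗ₜ[F] coord i u := by
    intro u
    have hL : (∑ i, (TensorProduct.mk F V F' (b i)) ∘ₗ (coord i) :
        V ⊗[F] F' →ₗ[F] V ⊗[F] F') = LinearMap.id := by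
      apply TensorProduct.ext'
      intro w d
      simp only [LinearMap.sum_apply, LinearMap.comp_apply, TensorProduct.mk_apply,
        LinearMap.id_apply, hcoord]
      calc ∑ i, b i ⊗ₜ[F] (b.repr w i • d)
          = ∑ i, (b.repr w i • b i) ⊗ₜ[F] d := by
            refine Finset.sum_congr rfl fun i _ => ?_
            rw [TensorProduct.smul_tmul]
        _ = (∑ i, b.repr w i • b i) ⊗ₜ[F] d := by rw [TensorProduct.sum_tmul]
        _ = w ⊗ₜ[F] d := by rw [Module.Basis.sum_repr]
    have := congrArg (fun (L : V ⊗[F] F' →ₗ[F] V ⊗[F] F') => L u) hL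
    simpa using this.symm
  set c : Fin (Module.finrank F V) → F' := fun i => coord i v with hc
  have hvsum : v = ∑ i, b i ⊗ₜ[F] c i := hrepr v
  -- the coordinates of v lie in F
  have hcF : ∀ i, c i ∈ Set.range (algebraMap F F') := by
    obtain ⟨-, hg⟩ | ⟨-, hg⟩ := hcase
    · -- Frobenius-semilinear case
      have key : ∀ j, c j = ∑ i, b.repr (f (b i)) j • (c i ^ p) := by
        intro j
        have hgv : g v = ∑ i, f (b i) ⊗ₜ[F] (c i ^ p) := by
          calc g v = g (∑ i, b i ⊗ₜ[F] c i) := by rw [← hvsum]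
            _ = ∑ i, g (b i ⊗ₜ[F] c i) := map_sum g _ _
            _ = ∑ i, f (b i) ⊗ₜ[F] (c i ^ p) := by
                refine Finset.sum_congr rfl fun i _ => ?_
                rw [hg, frobenius_def]
        calc c j = coord j v := rfl
          _ = coord j (g v) := by rw [hv]
          _ = ∑ i, coord j (f (b i) ⊗ₜ[F] (c i ^ p)) := by rw [hgv, map_sum]
          _ = ∑ i, b.repr (f (b i)) j • (c i ^ p) := by simp_rw [hcoord]
      intro i
      refine aux_case1 p c (fun j => ?_) i
      rw [key j]
      exact Submodule.sum_mem _ fun i _ =>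
        Submodule.smul_mem _ _ (Submodule.subset_span ⟨i, rfl⟩)
    · -- inverse-Frobenius-semilinear case
      have key : ∀ j, c j = ∑ i, b.repr (f (b i)) j • ((frobeniusEquiv F' p).symm (c i)) := by
        intro j
        have hgv : g v = ∑ i, f (b i) ⊗ₜ[F] ((frobeniusEquiv F' p).symm (c i)) := by
          calc g v = g (∑ i, b i ⊗ₜ[F] c i) := by rw [← hvsum]
            _ = ∑ i, g (b i ⊗ₜ[F] c i) := map_sum g _ _
            _ = ∑ i, f (b i) ⊗ₜ[F] ((frobeniusEquiv F' p).symm (c i)) := by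
                refine Finset.sum_congr rfl fun i _ => ?_
                rw [hg]
        calc c j = coord j v := rfl
          _ = coord j (g v) := by rw [hv]
          _ = ∑ i, coord j (f (b i) ⊗ₜ[F] ((frobeniusEquiv F' p).symm (c i))) := by
              rw [hgv, map_sum]
          _ = ∑ i, b.repr (f (b i)) j • ((frobeniusEquiv F' p).symm (c i)) := by
              simp_rw [hcoord]
      have key2 : ∀ j, c j ^ p = ∑ i, (b.repr (f (b i)) j ^ p) • c i := by
        intro j
        calc c j ^ p
            = (∑ i, b.repr (f (b i)) j • ((frobeniusEquiv F' p).symm (c i))) ^ p := by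
              rw [← key j]
          _ = ∑ i, (b.repr (f (b i)) j • ((frobeniusEquiv F' p).symm (c i))) ^ p :=
              sum_pow_char _ _ _
          _ = ∑ i, (b.repr (f (b i)) j ^ p) • c i := by
              refine Finset.sum_congr rfl fun i _ => ?_
              rw [_root_.smul_pow, frobeniusEquiv_symm_pow_p]
      intro i
      refine aux_case2 p c (fun j => ?_) i
      rw [key2 j]
      exact Submodule.sum_mem _ fun i _ =>
        Submodule.smul_mem _ _ (Submodule.subset_span ⟨i, rfl⟩)
  choose a ha using hcF
  refine ⟨∑ i, a i • b i, ?_⟩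
  show (∑ i, a i • b i) ⊗ₜ[F] (1 : F') = v
  calc (∑ i, a i • b i) ⊗ₜ[F] (1 : F')
      = ∑ i, (a i • b i) ⊗ₜ[F] (1 : F') := TensorProduct.sum_tmul _ _ _
    _ = ∑ i, b i ⊗ₜ[F] (a i • (1 : F')) := by
        refine Finset.sum_congr rfl fun i _ => ?_
        rw [TensorProduct.smul_tmul]
    _ = ∑ i, b i ⊗ₜ[F] c i := by
        refine Finset.sum_congr rfl fun i _ => ?_
        rw [Algebra.smul_def, mul_one, ha i]
    _ = v := hvsum.symm
end

section
/- Let K be an algebraically closed field of characteristic p. In the field K((t^ℚ)) of Hahn series with rational exponents, the element y = Σ_{m=1}^∞ λ^{p^{-1}+⋯+p^{-m}} t^{-p^{-1}-p^{-1-m}} (for fixed nonzero λ ∈ K) satisfies the algebraic equation t y^p − λ t^{1/p} y = λ t^{-1/p}; in particular y is algebraic over K(t). -/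
open scoped BigOperators

private lemma hahn_coeff_finset_sum {K : Type*} [Field K] {α : Type*} (s : Finset α)
    (f : α → HahnSeries ℚ K) (q : ℚ) :
    (∑ i ∈ s, f i).coeff q = ∑ i ∈ s, (f i).coeff q := by
  classical
  induction s using Finset.cons_induction with
  | empty => simp
  | cons a s ha ih => rw [Finset.sum_cons, Finset.sum_cons, HahnSeries.coeff_add, ih]

private lemma hahn_support_pow_bound {K : Type*} [Field K]
    {x : HahnSeries ℚ K} {a b : ℚ}
    (hx : ∀ q ∈ x.support, a ≤ q ∧ q < b) :
    ∀ n : ℕ, 1 ≤ n → ∀ q ∈ (x ^ n).support, (n : ℚ) * a ≤ q ∧ q < (n : ℚ) * b := by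
  intro n hn
  induction n with
  | zero => omega
  | succ n ih =>
    rcases Nat.lt_or_ge 0 n with h1 | h1
    · intro q hq
      rw [pow_succ] at hq
      obtain ⟨i, hi, j, hj, rfl⟩ := HahnSeries.support_mul_subset hq
      obtain ⟨hi1, hi2⟩ := ih h1 i hi
      obtain ⟨hj1, hj2⟩ := hx j hj
      push_cast
      constructor <;> nlinarith
    · interval_cases n
      intro q hq
      rw [pow_one] at hq
      obtain ⟨h1, h2⟩ := hx q hq
      push_cast
      constructor <;> linarith

/-- In the Hahn series field `K((t^ℚ))` over an algebraically closed field `K` of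
characteristic `p`, the series `y = Σ_{m≥1} λ^{p^{-1}+⋯+p^{-m}} t^{-p^{-1}-p^{-1-m}}`
(for `λ ∈ K` nonzero) satisfies `t yᵖ − λ t^{1/p} y = λ t^{-1/p}`; in particular `y`
is algebraic over `K(t)`. -/
theorem counterexample_y_algebraic
    (p : ℕ) [Fact p.Prime] (K : Type*) [Field K] [IsAlgClosed K] [CharP K p]
    (l : K) (hl : l ≠ 0)
    (y : HahnSeries ℚ K)
    (hy₁ : ∀ m : ℕ, 1 ≤ m →
      y.coeff (-(p : ℚ)⁻¹ - (p : ℚ)⁻¹ ^ (m + 1)) =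
        ∏ i ∈ Finset.Icc 1 m, (⇑(frobeniusEquiv K p).symm)^[i] l)
    (hy₂ : ∀ q : ℚ, (¬ ∃ m : ℕ, 1 ≤ m ∧ q = -(p : ℚ)⁻¹ - (p : ℚ)⁻¹ ^ (m + 1)) →
      y.coeff q = 0) :
    HahnSeries.single (1 : ℚ) (1 : K) * y ^ p -
        HahnSeries.single ((p : ℚ)⁻¹) l * y = HahnSeries.single (-(p : ℚ)⁻¹) l ∧
      ∃ Q : Polynomial (Polynomial K), Q ≠ 0 ∧
        Polynomial.eval₂
          (Polynomial.eval₂RingHom (HahnSeries.C : K →+* HahnSeries ℚ K)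
            (HahnSeries.single (1 : ℚ) (1 : K))) y Q = 0 := by
  classical
  have hp : p.Prime := Fact.out
  have hp1 : 1 ≤ p := hp.one_le
  have hp0 : (0:ℚ) < (p:ℚ) := by exact_mod_cast hp.pos
  have hpne : (p:ℚ) ≠ 0 := ne_of_gt hp0
  set ε : ℚ := (p:ℚ)⁻¹ with hεdef
  have hε0 : 0 < ε := by positivity
  have hε1 : ε < 1 := by
    rw [hεdef]
    rw [inv_lt_one_iff₀]
    right
    exact_mod_cast hp.one_lt
  have hpow_anti : ∀ {m n : ℕ}, m < n → ε ^ n < ε ^ m :=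
    fun h => pow_lt_pow_right_of_lt_one₀ hε0 hε1 h
  have hpow_inj : ∀ {m n : ℕ}, ε ^ m = ε ^ n → m = n := by
    intro m n h
    by_contra hmn
    rcases Nat.lt_or_ge m n with h1 | h1
    · exact absurd h (ne_of_gt (hpow_anti h1))
    · exact absurd h.symm (ne_of_gt (hpow_anti (lt_of_le_of_ne h1 (Ne.symm hmn))))
  have hpε : (p:ℚ) * ε = 1 := mul_inv_cancel₀ hpne
  set f : K → K := ⇑(frobeniusEquiv K p).symm with hfdef
  set c : ℕ → K := fun m => ∏ i ∈ Finset.Icc 1 m, f^[i] l with hcdef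
  set e : ℕ → ℚ := fun m => -ε - ε ^ (m + 1) with hedef
  have hy₁' : ∀ m : ℕ, 1 ≤ m → y.coeff (e m) = c m := fun m hm => hy₁ m hm
  have hy₂' : ∀ q : ℚ, (¬ ∃ m : ℕ, 1 ≤ m ∧ q = e m) → y.coeff q = 0 :=
    fun q hq => hy₂ q hq
  have he_inj : ∀ {m n : ℕ}, e m = e n → m = n := by
    intro m n h
    rw [hedef] at h
    simp only at h
    have : ε ^ (m+1) = ε ^ (n+1) := by linarith
    have := hpow_inj this
    omega
  have he_mono : ∀ {m n : ℕ}, m ≤ n → e m ≤ e n := by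
    intro m n h
    rw [hedef]
    simp only
    have : ε ^ (n+1) ≤ ε ^ (m+1) := pow_le_pow_of_le_one hε0.le hε1.le (by omega)
    linarith
  have he_lt : ∀ m : ℕ, e m < -ε := by
    intro m
    rw [hedef]
    simp only
    have : 0 < ε ^ (m+1) := pow_pos hε0 _
    linarith
  have hpe : ∀ m : ℕ, (p:ℚ) * e m = -1 - ε ^ m := by
    intro m
    rw [hedef]
    simp only
    have : (p:ℚ) * ε ^ (m+1) = ε ^ m := by
      rw [pow_succ', ← mul_assoc, hpε, one_mul]
    rw [mul_sub, mul_neg, hpε, this]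
  have hc0 : c 0 = 1 := by rw [hcdef]; simp
  have hcsucc : ∀ m : ℕ, c (m + 1) = c m * f^[m+1] l := by
    intro m
    simp only [hcdef]
    rw [Finset.prod_Icc_succ_top (by omega)]
  have hfpow : ∀ x : K, (f x) ^ p = x := fun x => frobeniusEquiv_symm_pow_p K p x
  have hcp : ∀ m : ℕ, c (m + 1) ^ p = l * c m := by
    intro m
    induction m with
    | zero =>
      rw [hcsucc, hc0, one_mul]
      show (f l) ^ p = l * c 0
      rw [hfpow, hc0, mul_one]
    | succ n ih =>
      rw [hcsucc (n+1), mul_pow, ih]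
      rw [Function.iterate_succ_apply', hfpow]
      rw [hcsucc n]
      ring
  -- truncations
  set yN : ℕ → HahnSeries ℚ K :=
    fun N => ∑ m ∈ Finset.Icc 1 N, HahnSeries.single (e m) (c m) with hyNdef
  have hyN_coeff_e : ∀ N m, 1 ≤ m → m ≤ N → (yN N).coeff (e m) = c m := by
    intro N m hm hmN
    simp only [hyNdef]
    rw [hahn_coeff_finset_sum, Finset.sum_eq_single m]
    · exact HahnSeries.coeff_single_same _ _
    · intro n _ hne
      exact HahnSeries.coeff_single_of_ne (fun h => hne ((he_inj h).symm))
    · intro h; exact absurd (Finset.mem_Icc.mpr ⟨hm, hmN⟩) h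
  have hyN_coeff_zero : ∀ N q, (¬ ∃ m : ℕ, 1 ≤ m ∧ q = e m) → (yN N).coeff q = 0 := by
    intro N q hq
    simp only [hyNdef]
    rw [hahn_coeff_finset_sum]
    refine Finset.sum_eq_zero fun m hm => ?_
    rw [Finset.mem_Icc] at hm
    exact HahnSeries.coeff_single_of_ne (fun h => hq ⟨m, hm.1, h⟩)
  have hrN_support : ∀ N, ∀ q ∈ (y - yN N).support, e (N+1) ≤ q ∧ q < -ε := by
    intro N q hq
    rw [HahnSeries.mem_support, HahnSeries.coeff_sub] at hq
    by_cases hex : ∃ m : ℕ, 1 ≤ m ∧ q = e m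
    · obtain ⟨m, hm, rfl⟩ := hex
      by_cases hmN : m ≤ N
      · exfalso
        rw [hy₁' m hm, hyN_coeff_e N m hm hmN, sub_self] at hq
        exact hq rfl
      · exact ⟨he_mono (by omega), he_lt m⟩
    · exfalso
      rw [hy₂' q hex, hyN_coeff_zero N q hex, sub_self] at hq
      exact hq rfl
  haveI : CharP (HahnSeries ℚ K) p :=
    charP_of_injective_ringHom (HahnSeries.C_injective (Γ := ℚ) (R := K)) p
  have hyNpow : ∀ N, (yN N) ^ p =
      ∑ m ∈ Finset.Icc 1 N, HahnSeries.single ((p:ℚ) * e m) (c m ^ p) := by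
    intro N
    simp only [hyNdef]
    rw [sum_pow_char]
    refine Finset.sum_congr rfl fun m _ => ?_
    rw [HahnSeries.single_pow, nsmul_eq_mul]
  have hrpow_zero : ∀ N q, (q < (p:ℚ) * e (N+1) ∨ (-1:ℚ) ≤ q) →
      ((y - yN N) ^ p).coeff q = 0 := by
    intro N q hq
    by_contra h
    have hmem : q ∈ ((y - yN N) ^ p).support := h
    obtain ⟨h1, h2⟩ := hahn_support_pow_bound (hrN_support N) p hp1 q hmem
    have hne : (p:ℚ) * -ε = -1 := by rw [mul_neg, hpε]
    rw [hne] at h2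
    rcases hq with h3 | h3
    · linarith
    · linarith
  have hsplit : ∀ N q, (y ^ p).coeff q =
      ((yN N) ^ p).coeff q + ((y - yN N) ^ p).coeff q := by
    intro N q
    have : y = yN N + (y - yN N) := by ring
    conv_lhs => rw [this]
    rw [add_pow_char, HahnSeries.coeff_add]
  -- coefficient computation for y ^ p
  have hA : ∀ M : ℕ, (y ^ p).coeff (-1 - ε ^ (M + 1)) = l * c M := by
    intro M
    rw [hsplit (M + 1)]
    have h1 : ((y - yN (M+1)) ^ p).coeff (-1 - ε ^ (M+1)) = 0 := by
      apply hrpow_zero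
      left
      rw [hpe (M+2)]
      have : ε ^ (M+2) < ε ^ (M+1) := hpow_anti (by omega)
      linarith
    rw [h1, add_zero, hyNpow]
    rw [hahn_coeff_finset_sum, Finset.sum_eq_single (M+1)]
    · rw [show (p:ℚ) * e (M+1) = -1 - ε ^ (M+1) from hpe _, HahnSeries.coeff_single_same]
      exact hcp M
    · intro n _ hne
      refine HahnSeries.coeff_single_of_ne ?_
      rw [hpe n]
      intro h
      exact hne (hpow_inj (show ε ^ n = ε ^ (M+1) by linarith))
    · intro h; exact absurd (Finset.mem_Icc.mpr ⟨by omega, le_refl _⟩) h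
  have hB : ∀ r : ℚ, (¬ ∃ m : ℕ, 1 ≤ m ∧ r = -1 - ε ^ m) → (y ^ p).coeff r = 0 := by
    intro r hr
    rcases lt_or_ge r (-1 : ℚ) with hrlt | hrge
    · obtain ⟨n, hn⟩ := exists_pow_lt_of_lt_one (x := -1 - r) (y := ε) (by linarith) hε1
      rw [hsplit n]
      have h1 : ((y - yN n) ^ p).coeff r = 0 := by
        apply hrpow_zero
        left
        rw [hpe (n+1)]
        have : ε ^ (n+1) ≤ ε ^ n := pow_le_pow_of_le_one hε0.le hε1.le (by omega)
        linarith
      rw [h1, add_zero, hyNpow, hahn_coeff_finset_sum]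
      refine Finset.sum_eq_zero fun m hm => ?_
      rw [Finset.mem_Icc] at hm
      refine HahnSeries.coeff_single_of_ne ?_
      rw [hpe m]
      intro h
      exact hr ⟨m, hm.1, h⟩
    · rw [hsplit 1]
      have h1 : ((y - yN 1) ^ p).coeff r = 0 := hrpow_zero 1 r (Or.inr hrge)
      rw [h1, add_zero, hyNpow, hahn_coeff_finset_sum]
      refine Finset.sum_eq_zero fun m hm => ?_
      rw [Finset.mem_Icc] at hm
      refine HahnSeries.coeff_single_of_ne ?_
      rw [hpe m]
      intro h
      have : 0 < ε ^ m := pow_pos hε0 m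
      rw [h] at hrge
      linarith
  -- the functional equation
  have hmain : HahnSeries.single (1 : ℚ) (1 : K) * y ^ p -
      HahnSeries.single ((p : ℚ)⁻¹) l * y = HahnSeries.single (-(p : ℚ)⁻¹) l := by
    ext q
    rw [HahnSeries.coeff_sub]
    have h1 : (HahnSeries.single (1:ℚ) (1:K) * y ^ p).coeff q = (y ^ p).coeff (q - 1) := by
      have := HahnSeries.coeff_single_mul_add (r := (1:K)) (x := y ^ p)
        (a := q - 1) (b := (1:ℚ))
      rw [show (q - 1) + (1:ℚ) = q by ring, one_mul] at this
      exact this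
    have h2 : (HahnSeries.single ε l * y).coeff q = l * y.coeff (q - ε) := by
      have := HahnSeries.coeff_single_mul_add (r := l) (x := y) (a := q - ε) (b := ε)
      rw [show (q - ε) + ε = q by ring] at this
      exact this
    rw [h1, h2, HahnSeries.coeff_single]
    by_cases hq : ∃ m : ℕ, 1 ≤ m ∧ q = -ε ^ m
    · obtain ⟨m, hm, rfl⟩ := hq
      obtain ⟨M, rfl⟩ : ∃ M, m = M + 1 := ⟨m - 1, by omega⟩
      have hq1 : -ε ^ (M+1) - 1 = -1 - ε ^ (M+1) := by ring
      rw [hq1, hA M]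
      rcases Nat.eq_zero_or_pos M with hM0 | hM1
      · subst hM0
        have hy0 : y.coeff (-ε ^ 1 - ε) = 0 := by
          apply hy₂'
          rintro ⟨k, hk, hkeq⟩
          rw [hedef] at hkeq
          simp only at hkeq
          have : ε ^ (k+1) = ε ^ 1 := by rw [pow_one] at hkeq ⊢; linarith
          have := hpow_inj this
          omega
        rw [hy0, mul_zero, sub_zero, hc0, mul_one, if_pos (by rw [pow_one])]
      · have hqe : -ε ^ (M+1) - ε = e M := by
          rw [hedef]
          simp only
          ring
        rw [hqe, hy₁' M hM1, sub_self, if_neg]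
        intro h
        have : ε ^ (M+1) = ε ^ 1 := by rw [pow_one]; linarith
        have := hpow_inj this
        omega
    · have hB' : (y ^ p).coeff (q - 1) = 0 := by
        apply hB
        rintro ⟨m, hm, hmeq⟩
        exact hq ⟨m, hm, by linarith⟩
      have hy0 : y.coeff (q - ε) = 0 := by
        apply hy₂'
        rintro ⟨k, hk, hkeq⟩
        rw [hedef] at hkeq
        simp only at hkeq
        exact hq ⟨k + 1, by omega, by linarith⟩
      rw [hB', hy0, mul_zero, sub_zero, if_neg]
      intro h
      exact hq ⟨1, le_refl 1, by rw [pow_one]; exact h⟩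
  refine ⟨hmain, ?_⟩
  -- the polynomial
  have hE2 : HahnSeries.single ((p:ℚ) + 1) (1:K) * y ^ (p ^ 2) -
      HahnSeries.C (l ^ p) * HahnSeries.single (2:ℚ) (1:K) * y ^ p
      = HahnSeries.C (l ^ p) := by
    have h := congrArg (· ^ p) hmain
    rw [sub_pow_char, mul_pow, mul_pow, ← pow_mul, ← sq,
      HahnSeries.single_pow, HahnSeries.single_pow, HahnSeries.single_pow,
      nsmul_eq_mul, nsmul_eq_mul, nsmul_eq_mul, mul_one, one_pow,
      hpε, mul_neg, hpε] at h
    have h2 := congrArg (HahnSeries.single (1:ℚ) (1:K) * ·) h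
    rw [mul_sub, ← mul_assoc, ← mul_assoc, HahnSeries.single_mul_single,
      HahnSeries.single_mul_single, HahnSeries.single_mul_single,
      one_mul, one_mul] at h2
    rw [show (1:ℚ) + -1 = 0 by ring, show (1:ℚ) + 1 = 2 by ring] at h2
    rw [add_comm (1:ℚ) (p:ℚ)] at h2
    have hC : (HahnSeries.C (l ^ p) : HahnSeries ℚ K) = HahnSeries.single (0:ℚ) (l ^ p) := rfl
    rw [hC, HahnSeries.single_mul_single, zero_add, mul_one]
    exact h2
  refine ⟨Polynomial.C (Polynomial.X ^ (p+1)) * Polynomial.X ^ (p^2)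
    - Polynomial.C (Polynomial.C (l ^ p) * Polynomial.X ^ 2) * Polynomial.X ^ p
    - Polynomial.C (Polynomial.C (l ^ p)), ?_, ?_⟩
  · intro h0
    have hco := congrArg (fun Q => Polynomial.coeff Q (p^2)) h0
    have hpp : ¬ (p^2 = p) := by nlinarith [hp.two_le]
    have hpp0 : ¬ (p^2 = 0) := by positivity
    simp only [Polynomial.coeff_sub, Polynomial.coeff_C_mul, Polynomial.coeff_X_pow,
      Polynomial.coeff_C, Polynomial.coeff_zero, if_pos rfl, if_neg hpp, if_neg hpp0,
      mul_one, mul_zero, sub_zero, if_true] at hco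
    exact pow_ne_zero (p+1) (Polynomial.X_ne_zero (R := K)) hco
  · rw [Polynomial.eval₂_sub, Polynomial.eval₂_sub, Polynomial.eval₂_mul,
      Polynomial.eval₂_mul, Polynomial.eval₂_C, Polynomial.eval₂_C, Polynomial.eval₂_C,
      Polynomial.eval₂_pow, Polynomial.eval₂_pow, Polynomial.eval₂_X]
    rw [Polynomial.coe_eval₂RingHom, Polynomial.eval₂_pow, Polynomial.eval₂_X,
      Polynomial.eval₂_mul, Polynomial.eval₂_C, Polynomial.eval₂_pow, Polynomial.eval₂_X]
    rw [HahnSeries.single_pow, HahnSeries.single_pow, nsmul_eq_mul, nsmul_eq_mul,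
      mul_one, mul_one, one_pow, one_pow]
    push_cast
    exact sub_eq_zero.mpr hE2
end

section
/- Let K be an algebraically closed field of characteristic p and let K' be an algebraically closed field containing K. If x ∈ K((t^ℚ)) ⊆ K'((t^ℚ)) is integral over K'(t), then x is integral over K(t). -/
open Polynomial HahnSeries Finset

section Aux

variable {K K' : Type*} [Field K] [Field K'] [Algebra K K']

/-- Descend a linear relation with coefficients in `K'` to one with coefficients in `K`,
using a `K`-basis of `K'`. -/
lemma hahn_descend_lemma {ι : Type*} (s : Finset ι) (c : ι → K') (v : ι → ℚ → K)
    (hc : ∃ i ∈ s, c i ≠ 0)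
    (h : ∀ q : ℚ, ∑ i ∈ s, (v i q) • (c i) = 0) :
    ∃ a : ι → K, (∃ i ∈ s, a i ≠ 0) ∧ ∀ q : ℚ, ∑ i ∈ s, v i q * a i = 0 := by
  obtain ⟨i0, hi0s, hi0⟩ := hc
  let B := Module.Basis.ofVectorSpace K K'
  have h0 : B.repr (c i0) ≠ 0 := by simpa using hi0
  obtain ⟨b0, hb0⟩ := Finsupp.ne_iff.mp h0
  refine ⟨fun i => B.repr (c i) b0, ⟨i0, hi0s, by simpa using hb0⟩, fun q => ?_⟩
  have := congrArg (fun y => B.repr y b0) (h q)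
  simpa [map_sum, Finsupp.smul_apply, smul_eq_mul] using this

lemma hahn_single_mul_eq_smul {R : Type*} [CommRing R] (r : R) (g : ℚ) (z : HahnSeries ℚ R) :
    HahnSeries.single g r * z = r • (HahnSeries.single g (1 : R) * z) := by
  rw [← HahnSeries.single_zero_mul_eq_smul, ← mul_assoc, HahnSeries.single_mul_single,
    zero_add, mul_one]

lemma hahn_eval_sum_monomials {R : Type*} [CommRing R] (y : HahnSeries ℚ R)
    (s : Finset (ℕ × ℕ)) (d : ℕ × ℕ → R) :
    Polynomial.eval₂ (Polynomial.eval₂RingHom (HahnSeries.C : R →+* HahnSeries ℚ R)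
        (HahnSeries.single (1 : ℚ) (1 : R))) y
        (∑ p ∈ s, Polynomial.monomial p.2 (Polynomial.monomial p.1 (d p)))
      = ∑ p ∈ s, d p • ((HahnSeries.single (p.1 : ℚ) 1 : HahnSeries ℚ R) * y ^ p.2) := by
  rw [Polynomial.eval₂_finset_sum]
  refine Finset.sum_congr rfl fun p _ => ?_
  rw [Polynomial.eval₂_monomial, Polynomial.coe_eval₂RingHom, Polynomial.eval₂_monomial,
    HahnSeries.single_pow]
  have h1 : p.1 • (1 : ℚ) = (p.1 : ℚ) := by simp
  rw [h1, one_pow,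
    show (HahnSeries.C (d p) : HahnSeries ℚ R) = HahnSeries.single 0 (d p) from rfl,
    HahnSeries.single_mul_single, zero_add, mul_one, hahn_single_mul_eq_smul]

lemma hahn_coeff_sum {R : Type*} [CommRing R] {ι : Type*} (t : Finset ι)
    (w : ι → HahnSeries ℚ R) (q : ℚ) :
    (∑ p ∈ t, w p).coeff q = ∑ p ∈ t, (w p).coeff q := by
  induction t using Finset.cons_induction <;> simp [*]

end Aux

/-- Algebraicity over the rational function field is insensitive to extension of the
coefficient field: if `K ⊆ K'` are algebraically closed fields of characteristic `p` and
`x ∈ K((t^ℚ)) ⊆ K'((t^ℚ))` is integral (equivalently, algebraic) over `K'(t)`, then `x` is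
integral over `K(t)`. -/
theorem algebraic_descends_to_smaller_coefficient_field
    (p : ℕ) [Fact p.Prime] (K K' : Type*) [Field K] [Field K'] [IsAlgClosed K] [IsAlgClosed K']
    [CharP K p] [CharP K' p] [Algebra K K']
    (x : HahnSeries ℚ K) (x' : HahnSeries ℚ K')
    (hxx' : ∀ q : ℚ, x'.coeff q = algebraMap K K' (x.coeff q))
    (halg : ∃ Q : Polynomial (Polynomial K'), Q ≠ 0 ∧
      Polynomial.eval₂
        (Polynomial.eval₂RingHom (HahnSeries.C : K' →+* HahnSeries ℚ K')
          (HahnSeries.single (1 : ℚ) (1 : K'))) x' Q = 0) :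
    ∃ Q : Polynomial (Polynomial K), Q ≠ 0 ∧
      Polynomial.eval₂
        (Polynomial.eval₂RingHom (HahnSeries.C : K →+* HahnSeries ℚ K)
          (HahnSeries.single (1 : ℚ) (1 : K))) x Q = 0 := by
  classical
  obtain ⟨Q', hQ'ne, hQ'⟩ := halg
  set f : K →+* K' := algebraMap K K' with hf
  -- `x'` is the coefficientwise image of `x`
  have hx'm : x' = x.map f := by
    ext q
    simp [hxx', HahnSeries.map_coeff]
  have hmul : ∀ z w : HahnSeries ℚ K, (z * w).map f = z.map f * w.map f := by
    intro z w
    exact HahnSeries.map_mul f.toNonUnitalRingHom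
  have hpow : ∀ j : ℕ, (x ^ j).map f = x' ^ j := by
    intro j
    induction j with
    | zero =>
        simp only [pow_zero]
        ext g
        simp [HahnSeries.map_coeff, HahnSeries.coeff_one, apply_ite f]
    | succ j ih =>
        rw [pow_succ, hmul, ih, hx'm, pow_succ]
  -- key coefficientwise compatibility
  set v : ℕ × ℕ → ℚ → K := fun p q =>
    ((HahnSeries.single (p.1 : ℚ) 1 : HahnSeries ℚ K) * x ^ p.2).coeff q with hv
  have hkey : ∀ (p : ℕ × ℕ) (q : ℚ),
      ((HahnSeries.single (p.1 : ℚ) 1 : HahnSeries ℚ K') * x' ^ p.2).coeff q = f (v p q) := by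
    intro p q
    have hmap : ((HahnSeries.single (p.1 : ℚ) 1 : HahnSeries ℚ K) * x ^ p.2).map f
        = (HahnSeries.single (p.1 : ℚ) 1 : HahnSeries ℚ K') * x' ^ p.2 := by
      rw [hmul, hpow]
      congr 1
      ext g
      by_cases h : g = (p.1 : ℚ) <;> simp [h, HahnSeries.map_coeff]
    rw [← hmap]
    simp [HahnSeries.map_coeff]
    rfl
  -- set up degrees and the index set
  set n := Q'.natDegree + 1 with hn
  set m := (Finset.range n).sup (fun j => (Q'.coeff j).natDegree) + 1 with hm
  set s : Finset (ℕ × ℕ) := Finset.range m ×ˢ Finset.range n with hs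
  set c : ℕ × ℕ → K' := fun p => (Q'.coeff p.2).coeff p.1 with hc
  have hdeg : ∀ j ∈ Finset.range n, (Q'.coeff j).natDegree < m := by
    intro j hj
    exact Nat.lt_succ_of_le (Finset.le_sup (f := fun j => (Q'.coeff j).natDegree) hj)
  -- expand Q' as a sum of monomials over s
  have hQ'sum : Q' = ∑ p ∈ s, Polynomial.monomial p.2 (Polynomial.monomial p.1 (c p)) := by
    conv_lhs => rw [Q'.as_sum_range' n (Nat.lt_succ_self _)]
    rw [hs, Finset.sum_product, Finset.sum_comm]
    refine Finset.sum_congr rfl fun j hj => ?_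
    conv_lhs => rw [(Q'.coeff j).as_sum_range' m (hdeg j hj)]
    rw [← map_sum (Polynomial.monomial j)]
  -- the K'-linear relation among the v's
  have hrel : ∀ q : ℚ, ∑ pp ∈ s, (v pp q) • (c pp) = 0 := by
    intro q
    have h0 : (∑ pp ∈ s, c pp • ((HahnSeries.single (pp.1 : ℚ) 1 : HahnSeries ℚ K')
        * x' ^ pp.2)).coeff q = 0 := by
      rw [← hahn_eval_sum_monomials x' s c, ← hQ'sum, hQ']
      rfl
    rw [hahn_coeff_sum] at h0
    refine Eq.trans (Finset.sum_congr rfl fun pp _ => ?_) h0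
    rw [HahnSeries.coeff_smul, hkey pp q, smul_eq_mul, Algebra.smul_def, mul_comm]
  -- nontriviality of c on s
  have hcs : ∃ pp ∈ s, c pp ≠ 0 := by
    refine ⟨((Q'.coeff Q'.natDegree).natDegree, Q'.natDegree), ?_, ?_⟩
    · have h1 : Q'.natDegree ∈ Finset.range n := by
        rw [Finset.mem_range, hn]
        exact Nat.lt_succ_self _
      exact Finset.mem_product.mpr ⟨Finset.mem_range.mpr (hdeg _ h1), h1⟩
    · have h2 : Q'.coeff Q'.natDegree ≠ 0 := by
        rw [← Polynomial.leadingCoeff]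
        exact Polynomial.leadingCoeff_ne_zero.mpr hQ'ne
      show (Q'.coeff Q'.natDegree).coeff (Q'.coeff Q'.natDegree).natDegree ≠ 0
      rw [← Polynomial.leadingCoeff]
      exact Polynomial.leadingCoeff_ne_zero.mpr h2
  -- descend
  obtain ⟨a, ⟨p1, hp1s, hp1⟩, ha⟩ := hahn_descend_lemma s c v hcs hrel
  refine ⟨∑ pp ∈ s, Polynomial.monomial pp.2 (Polynomial.monomial pp.1 (a pp)), ?_, ?_⟩
  · -- the descended polynomial is nonzero
    intro hzero
    apply hp1
    have hco : ((∑ pp ∈ s, Polynomial.monomial pp.2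
        (Polynomial.monomial pp.1 (a pp))).coeff p1.2).coeff p1.1 = a p1 := by
      rw [Polynomial.finset_sum_coeff, Polynomial.finset_sum_coeff]
      rw [Finset.sum_eq_single p1]
      · simp [Polynomial.coeff_monomial]
      · intro pp _ hne
        rw [Polynomial.coeff_monomial]
        by_cases h2 : pp.2 = p1.2
        · rw [if_pos h2, Polynomial.coeff_monomial]
          by_cases h1 : pp.1 = p1.1
          · exact absurd (Prod.ext h1 h2) hne
          · rw [if_neg h1]
        · rw [if_neg h2, Polynomial.coeff_zero]
      · intro habs
        exact absurd hp1s habs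
    rw [hzero] at hco
    simpa using hco.symm
  · -- it annihilates x
    rw [hahn_eval_sum_monomials x s a]
    ext q
    rw [hahn_coeff_sum]
    have : ∀ pp ∈ s, (a pp • ((HahnSeries.single (pp.1 : ℚ) 1 : HahnSeries ℚ K)
        * x ^ pp.2)).coeff q = v pp q * a pp := by
      intro pp _
      rw [HahnSeries.coeff_smul, smul_eq_mul, mul_comm]
    rw [Finset.sum_congr rfl this, ha q]
    simp
end

section
/- Let K be an algebraically closed field of characteristic p, and suppose y ∈ K((t^ℚ)) acts by y^p − y = x where x ∈ K((t^ℚ)) is supported on (0, ∞). Then y = c − x − x^p − x^{p²} − ⋯ for some c ∈ 𝔽_p, where the infinite sum converges in K((t^ℚ)) (only finitely many summands contribute to any coefficient). -/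
open HahnSeries

private lemma hahn_coeff_sum_s17 {K : Type*} [Field K] (s : Finset ℕ)
    (f : ℕ → HahnSeries ℚ K) (q : ℚ) :
    (∑ i ∈ s, f i).coeff q = ∑ i ∈ s, (f i).coeff q := by
  classical
  induction s using Finset.induction_on with
  | empty => simp
  | insert _ _ h ih => simp [Finset.sum_insert h, HahnSeries.coeff_add, ih]

/-- Let `K` be an algebraically closed field of characteristic `p` and suppose
`y^p − y = x` in `K((t^ℚ))` with `x` supported on `(0, ∞)`.  Then
`y = c − x − x^p − x^{p²} − ⋯` for some `c ∈ 𝔽_p`, the infinite sum converging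
coefficientwise (only finitely many summands contribute to any coefficient). -/
theorem artin_schreier_root_positive_support
    (p : ℕ) [Fact p.Prime] (K : Type*) [Field K] [IsAlgClosed K] [CharP K p]
    (x y : HahnSeries ℚ K) (hx : ∀ q ∈ x.support, 0 < q)
    (hxy : y ^ p - y = x) :
    (∀ q : ℚ, {n : ℕ | (x ^ p ^ n).coeff q ≠ 0}.Finite) ∧
    ∃ c : K, c ^ p = c ∧
      ∀ q : ℚ, y.coeff q = (if q = 0 then c else 0) - ∑ᶠ n : ℕ, (x ^ p ^ n).coeff q := by
  have hp : p.Prime := Fact.out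
  haveI : CharP (HahnSeries ℚ K) p :=
    charP_of_injective_ringHom (f := (HahnSeries.C : K →+* HahnSeries ℚ K))
      HahnSeries.C_injective p
  have hx0 : x.coeff 0 = 0 := by
    by_contra h
    exact absurd (hx 0 ((mem_support x 0).2 h)) (lt_irrefl 0)
  have hsmul : ∀ (n : ℕ) (a : ℚ), (n • a : ℚ) = (n : ℚ) * a := fun n a => by
    simp [nsmul_eq_mul]
  -- y has no negative coefficients
  have hyneg : ∀ q : ℚ, q < 0 → y.coeff q = 0 := by
    intro q hq
    by_cases hy0 : y = 0
    · simp [hy0]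
    have hord : 0 ≤ y.order := by
      by_contra h
      push_neg at h
      have hyp : (y : HahnSeries ℚ K) ^ p ≠ 0 := pow_ne_zero _ hy0
      have hcoe : (y ^ p).coeff ((y ^ p).order) ≠ 0 := coeff_order_eq_zero.not.mpr hyp
      have horder : (y ^ p).order = p • y.order := by simp [order_pow]
      have hlt : (p : ℚ) * y.order < y.order := by
        have := mul_lt_mul_of_neg_right (by exact_mod_cast hp.one_lt : (1:ℚ) < p) h
        simpa using this
      have hyp2 : y ^ p = x + y := by rw [← hxy]; ring
      rw [horder, hyp2] at hcoe
      apply hcoe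
      rw [HahnSeries.coeff_add]
      have hxz : x.coeff (p • y.order) = 0 := by
        by_contra hc
        have h2 := hx _ ((mem_support x _).2 hc)
        rw [hsmul] at h2
        nlinarith
      have hyz : y.coeff (p • y.order) = 0 := by
        apply coeff_eq_zero_of_lt_order
        rw [hsmul]
        exact hlt
      rw [hxz, hyz, add_zero]
    exact coeff_eq_zero_of_lt_order (lt_of_lt_of_le hq hord)
  -- split off the constant coefficient
  set c₀ : K := y.coeff 0 with hc₀
  set Y : HahnSeries ℚ K := y - HahnSeries.C c₀ with hYdef
  have hYcoeff : ∀ q : ℚ, Y.coeff q = y.coeff q - (if q = 0 then c₀ else 0) := by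
    intro q
    by_cases h : q = 0
    · subst h
      simp [hYdef, HahnSeries.coeff_sub, HahnSeries.C_apply, HahnSeries.coeff_single]
    · simp [hYdef, HahnSeries.coeff_sub, HahnSeries.C_apply, HahnSeries.coeff_single, h]
  have hYpos : ∀ q ∈ Y.support, 0 < q := by
    intro q hq
    rw [mem_support] at hq
    by_contra h
    push_neg at h
    rcases lt_or_eq_of_le h with h | h
    · exact hq (by rw [hYcoeff, hyneg q h, if_neg (ne_of_lt h), sub_zero])
    · apply hq
      rw [hYcoeff, h]
      simp [hc₀]
  have hYord : Y ≠ 0 → 0 < Y.order := by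
    intro h
    exact hYpos _ ((mem_support Y Y.order).2 (coeff_order_eq_zero.not.mpr h))
  -- coefficients of Y^N vanish at nonpositive exponents
  have hYpow0 : ∀ N : ℕ, 1 ≤ N → ∀ q : ℚ, q ≤ 0 → (Y ^ N).coeff q = 0 := by
    intro N hN q hq
    by_cases h0 : Y = 0
    · rw [h0, zero_pow (by omega), HahnSeries.coeff_zero]
    · apply coeff_eq_zero_of_lt_order
      rw [order_pow]
      exact lt_of_le_of_lt hq (nsmul_pos (hYord h0) (by omega))
  -- the Artin–Schreier equation for Y and the constant
  have hYkey : Y ^ p - Y = x - HahnSeries.C (c₀ ^ p - c₀) := by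
    have hsub : Y ^ p = y ^ p - (HahnSeries.C c₀) ^ p := sub_pow_char _ _
    have hCp : (HahnSeries.C c₀ : HahnSeries ℚ K) ^ p = HahnSeries.C (c₀ ^ p) :=
      (map_pow (HahnSeries.C : K →+* HahnSeries ℚ K) c₀ p).symm
    rw [hYdef, hsub, hCp, map_sub, ← hxy]
    ring
  have hY00 : Y.coeff 0 = 0 := by
    rw [hYcoeff 0]
    simp [hc₀]
  have hcfix : c₀ ^ p = c₀ := by
    have h0 : (Y ^ p).coeff 0 - Y.coeff 0 = x.coeff 0 - (c₀ ^ p - c₀) := by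
      have := congrArg (fun z => HahnSeries.coeff z 0) hYkey
      simpa [HahnSeries.coeff_sub, HahnSeries.C_apply, HahnSeries.coeff_single] using this
    rw [hYpow0 p hp.one_lt.le 0 le_rfl, hY00, hx0] at h0
    linear_combination h0
  have hYx : Y ^ p - Y = x := by
    rw [hYkey, hcfix, sub_self, map_zero, sub_zero]
  -- telescoping identity
  have htel : ∀ N : ℕ, Y ^ p ^ N = Y + ∑ n ∈ Finset.range N, x ^ p ^ n := by
    intro N
    induction N with
    | zero => simp
    | succ N ih =>
      have h1 : Y ^ p ^ (N + 1) = (Y ^ p ^ N) ^ p := by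
        rw [← pow_mul, pow_succ]
      have hYp : Y ^ p = Y + x := by rw [← hYx]; ring
      have h3 := map_add (frobenius (HahnSeries ℚ K) p) Y (∑ n ∈ Finset.range N, x ^ p ^ n)
      have h4 := map_sum (frobenius (HahnSeries ℚ K) p) (fun n => x ^ p ^ n) (Finset.range N)
      simp only [frobenius_def] at h3 h4
      rw [h1, ih, h3, h4, hYp]
      have h2 : ∀ n ∈ Finset.range N, (x ^ p ^ n) ^ p = x ^ p ^ (n + 1) := by
        intro n _
        rw [← pow_mul, pow_succ]
      rw [Finset.sum_congr rfl h2, Finset.sum_range_succ' (fun n => x ^ p ^ n)]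
      simp [pow_zero, pow_one]
      ring
  -- the case Y = 0
  by_cases hY0 : Y = 0
  · have hxz : x = 0 := by
      rw [← hYx, hY0, zero_pow hp.ne_zero, sub_zero]
    have hxpow : ∀ n : ℕ, (x ^ p ^ n : HahnSeries ℚ K) = 0 := fun n => by
      rw [hxz, zero_pow (pow_ne_zero n hp.ne_zero)]
    constructor
    · intro q
      convert Set.finite_empty using 1
      ext n
      simp [hxpow n]
    · refine ⟨c₀, hcfix, fun q => ?_⟩
      have hy : y = HahnSeries.C c₀ := by
        have := hY0
        rw [hYdef, sub_eq_zero] at this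
        exact this
      rw [hy, HahnSeries.C_apply, HahnSeries.coeff_single]
      have : (∑ᶠ n : ℕ, (x ^ p ^ n).coeff q) = 0 := by
        apply finsum_eq_zero_of_forall_eq_zero
        intro n
        rw [hxpow n, HahnSeries.coeff_zero]
      rw [this, sub_zero]
      split_ifs <;> rfl
  -- the main case
  have hm : 0 < Y.order := hYord hY0
  -- vanishing of coefficients of Y ^ p ^ N for large N
  have hbig : ∀ (q : ℚ) (N : ℕ), ⌈q / Y.order⌉₊ ≤ N → (Y ^ p ^ N).coeff q = 0 := by
    intro q N hN
    apply coeff_eq_zero_of_lt_order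
    rw [order_pow, hsmul]
    have h1 : q / Y.order ≤ (N : ℚ) :=
      le_trans (Nat.le_ceil _) (by exact_mod_cast hN)
    have h2 : (N : ℚ) < ((p : ℚ)) ^ N := by
      exact_mod_cast Nat.lt_pow_self (n := N) hp.one_lt
    have h3 : q / Y.order < ((p : ℚ)) ^ N := lt_of_le_of_lt h1 h2
    have h4 : q < ((p : ℚ)) ^ N * Y.order := (div_lt_iff₀ hm).mp h3
    calc q < ((p : ℚ)) ^ N * Y.order := h4
      _ = ((p ^ N : ℕ) : ℚ) * Y.order := by push_cast; ring
  -- vanishing of coefficients of x ^ p ^ n for large n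
  have hxvan : ∀ (q : ℚ) (n : ℕ), ⌈q / Y.order⌉₊ ≤ n → (x ^ p ^ n).coeff q = 0 := by
    intro q n hn
    have h1 : x ^ p ^ n = Y ^ p ^ (n + 1) - Y ^ p ^ n := by
      rw [htel (n + 1), htel n, Finset.sum_range_succ]
      ring
    rw [h1, HahnSeries.coeff_sub, hbig q (n + 1) (le_trans hn (Nat.le_succ n)),
      hbig q n hn, sub_self]
  constructor
  · intro q
    apply Set.Finite.subset (Set.finite_Iio ⌈q / Y.order⌉₊)
    intro n hn
    rw [Set.mem_Iio]
    by_contra h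
    push_neg at h
    exact hn (hxvan q n h)
  · refine ⟨c₀, hcfix, fun q => ?_⟩
    set N₀ := ⌈q / Y.order⌉₊ with hN₀
    have hsum : (∑ᶠ n : ℕ, (x ^ p ^ n).coeff q)
        = ∑ n ∈ Finset.range N₀, (x ^ p ^ n).coeff q := by
      apply finsum_eq_finset_sum_of_support_subset
      intro n hn
      simp only [Function.mem_support] at hn
      simp only [Finset.coe_range, Set.mem_Iio]
      by_contra h
      push_neg at h
      exact hn (hxvan q n h)
    have hcoeff := congrArg (fun z => HahnSeries.coeff z q) (htel N₀)
    simp only [HahnSeries.coeff_add] at hcoeff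
    rw [hbig q N₀ le_rfl, hahn_coeff_sum_s17] at hcoeff
    have h2 := hYcoeff q
    rw [hsum]
    linear_combination -h2 - hcoeff
end

section
/- Let K be an algebraically closed field of characteristic p, and suppose x ∈ K((t^ℚ)) is supported on (−1, 0) and y ∈ K((t^ℚ)) satisfies y^p − y = x with y supported on (−∞, 0). Then y differs from Σ_{n=1}^∞ x^{1/p^n} by an element of 𝔽_p, where x^{1/p^n} denotes the unique p^n-th root of x in K((t^ℚ)). -/
open HahnSeries

private lemma AS.coeff_pow_order {K : Type*} [Field K] (w : HahnSeries ℚ K) (n : ℕ) :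
    (w ^ n).coeff ((w ^ n).order) = w.coeff w.order ^ n := by
  induction n with
  | zero => simp
  | succ n ih =>
    rcases eq_or_ne w 0 with rfl | hw
    · simp [zero_pow (Nat.succ_ne_zero n)]
    · rw [pow_succ, order_mul (pow_ne_zero _ hw) hw, coeff_mul_order_add_order]
      simp only [leadingCoeff_eq]
      rw [ih, pow_succ]

private lemma AS.support_pow_neg {K : Type*} [Field K] {b : HahnSeries ℚ K}
    (hb : ∀ q ∈ b.support, q < 0) {k : ℕ} (hk : k ≠ 0) :
    ∀ q ∈ (b ^ k).support, q < 0 := by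
  obtain ⟨j, rfl⟩ := Nat.exists_eq_succ_of_ne_zero hk
  clear hk
  induction j with
  | zero => simpa using hb
  | succ j ih =>
    intro q hq
    rw [pow_succ] at hq
    obtain ⟨i, hi, l, hl, rfl⟩ := Set.mem_add.mp (support_mul_subset hq)
    have h1 := ih i hi
    have h2 := hb l hl
    linarith

private lemma AS.step {p : ℕ} (hp : p.Prime) {K : Type*} [Field K] {w u : HahnSeries ℚ K}
    {ε : ℚ} (hw : ∀ q ∈ w.support, q < 0) (hu : ∀ q ∈ u.support, -ε < q)
    (h : w ^ p - w = u) : ∀ q ∈ w.support, -(ε / p) < q := by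
  rcases eq_or_ne w 0 with rfl | hw0
  · intro q hq; simp at hq
  intro q hq
  have hm : w.coeff w.order ≠ 0 := coeff_order_eq_zero.not.2 hw0
  have hmem : w.order ∈ w.support := hm
  have hmneg : w.order < 0 := hw _ hmem
  have hple : (2:ℚ) ≤ (p:ℚ) := by exact_mod_cast hp.two_le
  have hppos : (0:ℚ) < (p:ℚ) := by linarith
  by_contra hcon
  push_neg at hcon
  have hqord : w.order ≤ q := order_le_of_coeff_ne_zero hq
  have hmle : w.order ≤ -(ε / p) := le_trans hqord hcon
  have hsm : (p • w.order : ℚ) = (p:ℚ) * w.order := nsmul_eq_mul _ _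
  have hr : (w ^ p).coeff ((p:ℚ) * w.order) = w.coeff w.order ^ p := by
    rw [← hsm, ← order_pow]; exact AS.coeff_pow_order w p
  have hlt : (p:ℚ) * w.order < w.order := by nlinarith
  have hcz : w.coeff ((p:ℚ) * w.order) = 0 := coeff_eq_zero_of_lt_order hlt
  have hune : u.coeff ((p:ℚ) * w.order) ≠ 0 := by
    rw [← h, coeff_sub, hcz, sub_zero, hr]
    exact pow_ne_zero _ hm
  have hmemu : (p:ℚ) * w.order ∈ u.support := hune
  have h1 : -ε < (p:ℚ) * w.order := hu _ hmemu
  have h2 : (p:ℚ) * w.order ≤ (p:ℚ) * -(ε / p) :=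
    mul_le_mul_of_nonneg_left hmle (le_of_lt hppos)
  have h3 : (p:ℚ) * -(ε / p) = -ε := by field_simp
  linarith

/-- Let `K` be an algebraically closed field of characteristic `p`, let `x ∈ K((t^ℚ))` be
supported on `(−1, 0)`, and let `y ∈ K((t^ℚ))`, supported on `(−∞, 0)`, satisfy
`y^p − y = x`.  Then `y` differs from `Σ_{n≥1} x^{1/p^n}` by an element of `𝔽_p`, where
`x^{1/p^n}` is the unique `p^n`-th root of `x` and the sum converges coefficientwise. -/
theorem artin_schreier_root_negative_support
    (p : ℕ) [Fact p.Prime] (K : Type*) [Field K] [IsAlgClosed K] [CharP K p]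
    (x y : HahnSeries ℚ K)
    (hx : ∀ q ∈ x.support, -1 < q ∧ q < 0)
    (hy : ∀ q ∈ y.support, q < 0)
    (hxy : y ^ p - y = x)
    (z : ℕ → HahnSeries ℚ K) (hz : ∀ n : ℕ, z n ^ p ^ n = x) :
    (∀ q : ℚ, {n : ℕ | (z (n + 1)).coeff q ≠ 0}.Finite) ∧
    ∃ c : K, c ^ p = c ∧
      ∀ q : ℚ, y.coeff q = (∑ᶠ n : ℕ, (z (n + 1)).coeff q) + (if q = 0 then c else 0) := by
  have hp : p.Prime := Fact.out
  haveI : CharP (HahnSeries ℚ K) p :=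
    charP_of_injective_ringHom (HahnSeries.C_injective (Γ := ℚ) (R := K)) p
  haveI : ExpChar (HahnSeries ℚ K) p := ExpChar.prime hp
  have hz0 : z 0 = x := by simpa using hz 0
  -- injectivity of p^n-th power
  have hinj : ∀ (n : ℕ) (a b : HahnSeries ℚ K), a ^ p ^ n = b ^ p ^ n → a = b := by
    intro n a b hab
    have h0 : (a - b) ^ p ^ n = 0 := by rw [sub_pow_char_pow, hab, sub_self]
    exact sub_eq_zero.mp ((pow_eq_zero_iff (pow_pos hp.pos n).ne').mp h0)
  -- supports of z n are negative
  have hzneg : ∀ n, ∀ q ∈ (z n).support, q < 0 := by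
    intro n
    by_contra hcon
    push_neg at hcon
    obtain ⟨q0, hq0mem, hq0⟩ := hcon
    have hbpwo : (Function.support fun q : ℚ => if q < 0 then (z n).coeff q else 0).IsPWO :=
      (z n).isPWO_support'.mono (fun q hq => by
        simp only [Function.mem_support, ne_eq] at hq ⊢
        intro h0
        exact hq (by rw [h0, ite_self]))
    set b : HahnSeries ℚ K := ⟨fun q => if q < 0 then (z n).coeff q else 0, hbpwo⟩ with hbdef
    have hbco : ∀ q, b.coeff q = if q < 0 then (z n).coeff q else 0 := fun q => rfl
    set c : HahnSeries ℚ K := z n - b with hcdef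
    have hcco : ∀ q, c.coeff q = if q < 0 then 0 else (z n).coeff q := by
      intro q
      rw [hcdef, coeff_sub, hbco]
      split_ifs with h <;> simp
    have hzeq : z n = b + c := by rw [hcdef]; ring
    have hcq0 : c.coeff q0 ≠ 0 := by
      rw [hcco, if_neg (not_lt.mpr hq0)]
      exact hq0mem
    have hcne : c ≠ 0 := by
      intro hc
      apply hcq0
      rw [hc, coeff_zero]
    have hmne : c.coeff c.order ≠ 0 := coeff_order_eq_zero.not.2 hcne
    have hm0 : 0 ≤ c.order := by
      by_contra h
      push_neg at h
      apply hmne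
      rw [hcco, if_pos h]
    have hbsupp : ∀ q ∈ b.support, q < 0 := by
      intro q hq
      by_contra h
      apply hq
      rw [hbco, if_neg h]
    have key : x = b ^ p ^ n + c ^ p ^ n := by
      rw [← hz n, hzeq, add_pow_char_pow]
    set r : ℚ := p ^ n • c.order with hrdef
    have hr' : r = ((p:ℚ))^n * c.order := by
      rw [hrdef, nsmul_eq_mul]; push_cast; ring
    have hr0 : (0:ℚ) ≤ r := by
      rw [hr']
      exact mul_nonneg (by positivity) hm0
    have hxr : x.coeff r = 0 := by
      by_contra h
      have := (hx r h).2
      linarith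
    have hbr : (b ^ p ^ n).coeff r = 0 := by
      by_contra h
      have := AS.support_pow_neg hbsupp (pow_pos hp.pos n).ne' r h
      linarith
    have hcr : (c ^ p ^ n).coeff r ≠ 0 := by
      have h1 := AS.coeff_pow_order c (p ^ n)
      rw [order_pow] at h1
      rw [hrdef, h1]
      exact pow_ne_zero _ hmne
    have hk : x.coeff r = (b ^ p ^ n).coeff r + (c ^ p ^ n).coeff r := by
      rw [key, coeff_add]
    rw [hxr, hbr, zero_add] at hk
    exact hcr hk.symm
  -- lower bound on supports of z n
  have hzlow : ∀ n, ∀ q ∈ (z n).support, -(((p:ℚ)^n)⁻¹) < q := by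
    intro n q hq
    have hzn : z n ≠ 0 := by
      intro h
      rw [h] at hq
      simp at hq
    have hx0 : x ≠ 0 := by
      rw [← hz n]
      exact pow_ne_zero _ hzn
    have hox : -1 < x.order := (hx _ (coeff_order_eq_zero.not.2 hx0)).1
    have hordeq : x.order = (p:ℚ)^n * (z n).order := by
      rw [← hz n, order_pow, nsmul_eq_mul]
      push_cast; ring
    have hppos : (0:ℚ) < (p:ℚ)^n := by
      have : (0:ℚ) < (p:ℚ) := by exact_mod_cast hp.pos
      positivity
    have hqord : (z n).order ≤ q := order_le_of_coeff_ne_zero hq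
    have hcancel : (p:ℚ)^n * ((p:ℚ)^n)⁻¹ = 1 := mul_inv_cancel₀ hppos.ne'
    nlinarith [hox, hordeq, hppos, hqord]
  -- telescoping
  have hstep : ∀ n, z (n + 1) ^ p = z n := by
    intro n
    apply hinj n
    have h1 : (z (n + 1) ^ p) ^ p ^ n = z (n + 1) ^ p ^ (n + 1) := by
      rw [← pow_mul, pow_succ']
    rw [h1, hz (n + 1), hz n]
  set S : ℕ → HahnSeries ℚ K := fun N => ∑ n ∈ Finset.range N, z (n + 1) with hSdef
  have hS : ∀ N, S N ^ p - S N = x - z N := by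
    intro N
    calc S N ^ p - S N = ∑ n ∈ Finset.range N, (z n - z (n + 1)) := by
          rw [hSdef]
          simp only
          rw [sum_pow_char, Finset.sum_sub_distrib]
          congr 1
          exact Finset.sum_congr rfl (fun n _ => hstep n)
      _ = z 0 - z N := Finset.sum_range_sub' _ _
      _ = x - z N := by rw [hz0]
  have hScoeff : ∀ N q, (S N).coeff q = ∑ n ∈ Finset.range N, (z (n + 1)).coeff q := by
    intro N q
    exact map_sum (coeff.addMonoidHom q) (fun n => z (n + 1)) (Finset.range N)
  have hSsupp : ∀ N, ∀ q ∈ (S N).support, q < 0 := by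
    intro N q hq
    have : (S N).coeff q ≠ 0 := hq
    rw [hScoeff] at this
    obtain ⟨n, _, hn⟩ := Finset.exists_ne_zero_of_sum_ne_zero this
    exact hzneg (n + 1) q hn
  have hwsupp : ∀ N, ∀ q ∈ (y - S N).support, q < 0 := by
    intro N q hq
    by_contra h
    have h1 : y.coeff q = 0 := by
      by_contra h1
      exact h (hy q h1)
    have h2 : (S N).coeff q = 0 := by
      by_contra h2
      exact h (hSsupp N q h2)
    apply hq
    rw [coeff_sub, h1, h2, sub_zero]
  have hweq : ∀ N, (y - S N) ^ p - (y - S N) = z N := by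
    intro N
    rw [sub_pow_char]
    linear_combination hxy - hS N
  have hwcoeff : ∀ N q, q ≤ -(((p:ℚ)^(N+1))⁻¹) → (y - S N).coeff q = 0 := by
    intro N q hql
    have hst := AS.step hp (hwsupp N) (hzlow N) (hweq N)
    by_contra h
    have h1 := hst q h
    have heps : ((p:ℚ)^N)⁻¹ / p = ((p:ℚ)^(N+1))⁻¹ := by
      rw [pow_succ, mul_inv, div_eq_mul_inv]
    rw [heps] at h1
    linarith
  have hvan : ∀ n q, q ≤ -(((p:ℚ)^(n+1))⁻¹) → (z (n + 1)).coeff q = 0 := by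
    intro n q hql
    by_contra h
    have := hzlow (n + 1) q h
    linarith
  have hgrow : ∀ n : ℕ, (n:ℚ) < (p:ℚ)^n := by
    intro n
    exact_mod_cast Nat.lt_pow_self (n := n) hp.one_lt
  have hppos : (0:ℚ) < (p:ℚ) := by exact_mod_cast hp.pos
  constructor
  · intro q
    by_cases hq : q < 0
    · obtain ⟨M, hM⟩ := exists_nat_ge ((-q)⁻¹ : ℚ)
      apply Set.Finite.subset (Finset.range (M + 1)).finite_toSet
      intro n hn
      simp only [Set.mem_setOf_eq] at hn
      have h1 : -(((p:ℚ)^(n+1))⁻¹) < q := hzlow (n + 1) q hn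
      have hq0 : (0:ℚ) < -q := by linarith
      have h2 : -q < ((p:ℚ)^(n+1))⁻¹ := by linarith
      have hpp : (0:ℚ) < (p:ℚ)^(n+1) := by positivity
      have h3 : (p:ℚ)^(n+1) < (-q)⁻¹ := by
        have e1 : (p:ℚ)^(n+1) * ((p:ℚ)^(n+1))⁻¹ = 1 := mul_inv_cancel₀ hpp.ne'
        have e2 : (-q) * (-q)⁻¹ = 1 := mul_inv_cancel₀ hq0.ne'
        nlinarith [inv_pos.mpr hq0, inv_pos.mpr hpp]
      have h4 : ((n:ℚ)+1) < (-q)⁻¹ := by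
        have := hgrow (n + 1)
        push_cast at this
        linarith
      simp only [Finset.coe_range, Set.mem_Iio]
      have h5 : (n:ℚ) < M := by linarith
      have h6 : n < M := by exact_mod_cast h5
      omega
    · convert Set.finite_empty
      ext n
      simp only [Set.mem_setOf_eq, Set.mem_empty_iff_false, iff_false, not_not]
      by_contra h
      exact hq (hzneg (n + 1) q h)
  · refine ⟨0, by rw [zero_pow hp.ne_zero], ?_⟩
    intro q
    rw [ite_self, add_zero]
    by_cases hq : q < 0
    · obtain ⟨M, hM⟩ := exists_nat_ge ((-q)⁻¹ : ℚ)
      have hq0 : (0:ℚ) < -q := by linarith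
      have hA : ((-q)⁻¹ : ℚ) ≤ (p:ℚ)^(M+1) := by
        have h1 := hgrow (M + 1)
        push_cast at h1
        linarith
      have hqle : q ≤ -(((p:ℚ)^(M+1))⁻¹) := by
        have hpp : (0:ℚ) < (p:ℚ)^(M+1) := by positivity
        have e1 : (p:ℚ)^(M+1) * ((p:ℚ)^(M+1))⁻¹ = 1 := mul_inv_cancel₀ hpp.ne'
        have e2 : (-q) * (-q)⁻¹ = 1 := mul_inv_cancel₀ hq0.ne'
        nlinarith [inv_pos.mpr hq0, inv_pos.mpr hpp]
      have hmono : ∀ n, M ≤ n → q ≤ -(((p:ℚ)^(n+1))⁻¹) := by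
        intro n hn
        have hle : (p:ℚ)^(M+1) ≤ (p:ℚ)^(n+1) := by
          apply pow_le_pow_right₀ (by exact_mod_cast hp.one_lt.le) (by omega)
        have hppM : (0:ℚ) < (p:ℚ)^(M+1) := by positivity
        have : ((p:ℚ)^(n+1))⁻¹ ≤ ((p:ℚ)^(M+1))⁻¹ := by
          apply inv_anti₀ hppM hle
        linarith
      have hsupp : (Function.support fun n => (z (n + 1)).coeff q) ⊆ ↑(Finset.range M) := by
        intro n hn
        simp only [Function.mem_support] at hn
        simp only [Finset.coe_range, Set.mem_Iio]
        by_contra hcon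
        push_neg at hcon
        exact hn (hvan n q (hmono n hcon))
      rw [finsum_eq_sum_of_support_subset _ hsupp, ← hScoeff M q]
      have h5 : (y - S M).coeff q = 0 := hwcoeff M q (le_trans hqle (by
        have hppM : (0:ℚ) < (p:ℚ)^(M+1) := by positivity
        linarith))
      rw [coeff_sub] at h5
      exact sub_eq_zero.mp h5
    · have hyq : y.coeff q = 0 := by
        by_contra h
        exact hq (hy q h)
      have hzq : ∀ n : ℕ, (z (n + 1)).coeff q = 0 := by
        intro n
        by_contra h
        exact hq (hzneg (n + 1) q h)
      rw [hyq, finsum_eq_zero_of_forall_eq_zero hzq]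
end
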